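/- arXiv:1006.4473 — 4 statements merged into one kernel-verified Lean document; each statement's English description precedes it below -/
import Mathlib

section
/- Let m be a positive integer, n = 2^m - 1, and k an integer with k ≥ n. For any two vertices x and y of the path graph P_n, the number of walks of length k from x to y in P_n is even. -/
/-- The path graph on `n` vertices. -/
def pathGraph (n : ℕ) : SimpleGraph (Fin n) where
  Adj i j := (i : ℕ) + 1 = j ∨ (j : ℕ) + 1 = i
  symm := ⟨fun i j h => h.symm⟩
  loopless := ⟨by intro i h; rcases h with h | h <;> omega⟩

instance (n : ℕ) : DecidableRel (pathGraph n).Adj :=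
  fun i j => inferInstanceAs (Decidable (((i : ℕ) + 1 = j) ∨ ((j : ℕ) + 1 = i)))

/-!
Let `t` generate a cyclic group of order `2 ^ (m + 1)` and put `e j = t ^ j + t ^ (-j)` in its
group algebra over `𝔽₂`. Since `e 1 * e (j + 1) = e j + e (j + 2)` and `e 0 = e (2 ^ m) = 0`, the
vector `(e 1, …, e n)` is an eigenvector of the adjacency matrix `A` of `P_n` with eigenvalue
`s = e 1`. In characteristic two `s ^ 2 ^ m = e (2 ^ m) = 0`, and `s` divides every `e j`, so `A ^ k`
kills the vector as soon as `2 ^ m ≤ k + 1`. The `e (z + 1)` have disjoint supports for `z < n`, so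
the coefficient of `t ^ (y + 1)` in the `x`-th entry of `A ^ k *ᵥ e` is the number of walks from `x`
to `y` modulo two.
-/

open Finset Matrix AddMonoidAlgebra

namespace AddMonoidAlgebra

variable {k G : Type*} [AddCommGroup G]

noncomputable def symmSingle [Semiring k] (g : G) : AddMonoidAlgebra k G :=
  single g 1 + single (-g) 1

theorem symmSingle_neg [Semiring k] (g : G) :
    (symmSingle (-g) : AddMonoidAlgebra k G) = symmSingle g := by
  rw [symmSingle, symmSingle, neg_neg, add_comm]

theorem symmSingle_mul_symmSingle [CommSemiring k] (a b : G) :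
    (symmSingle a * symmSingle b : AddMonoidAlgebra k G) =
      symmSingle (a + b) + symmSingle (a - b) := by
  simp only [symmSingle, add_mul, mul_add, single_mul_single, mul_one, neg_add, neg_sub]
  rw [sub_eq_add_neg, neg_add_eq_sub]
  abel

theorem symmSingle_mul_symmSingle_succ_nsmul [CommSemiring k] (g : G) (j : ℕ) :
    (symmSingle g * symmSingle ((j + 1) • g) : AddMonoidAlgebra k G) =
      symmSingle ((j + 2) • g) + symmSingle (j • g) := by
  rw [symmSingle_mul_symmSingle, ← symmSingle_neg (g - _)]
  congr 2 <;> module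

theorem coeff_symmSingle_natCast_natCast [Semiring k] {N a b : ℕ} (ha : 0 < a) (hb : 0 < b)
    (hab : a + b < N) :
    (symmSingle (a : ZMod N) : AddMonoidAlgebra k (ZMod N)).coeff b = if a = b then 1 else 0 := by
  have hneg : -(a : ZMod N) ≠ b := by
    rw [ne_eq, neg_eq_iff_add_eq_zero, ← Nat.cast_add, ZMod.natCast_eq_zero_iff]
    exact fun h => absurd (Nat.le_of_dvd (by omega) h) (by omega)
  simp only [symmSingle, coeff_add, coeff_single, Finsupp.add_apply, Finsupp.single_apply,
    ZMod.natCast_eq_natCast_iff', Nat.mod_eq_of_lt (show a < N by omega),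
    Nat.mod_eq_of_lt (show b < N by omega), if_neg hneg, add_zero]

variable [CommRing k] [CharP k 2]

theorem symmSingle_eq_zero_of_neg_eq {g : G} (hg : -g = g) :
    (symmSingle g : AddMonoidAlgebra k G) = 0 := by
  rw [symmSingle, hg, ← single_add, CharTwo.add_self_eq_zero, single_zero]

theorem symmSingle_pow_two_pow (g : G) (m : ℕ) :
    (symmSingle g : AddMonoidAlgebra k G) ^ 2 ^ m = symmSingle (2 ^ m • g) := by
  induction m with
  | zero => simp
  | succ m ih =>
    rw [pow_succ, pow_mul, ih, sq, symmSingle_mul_symmSingle, sub_self,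
      symmSingle_eq_zero_of_neg_eq neg_zero, add_zero, ← two_nsmul, smul_smul, ← pow_succ',
      pow_succ]

theorem symmSingle_dvd_symmSingle_nsmul (g : G) (j : ℕ) :
    (symmSingle g : AddMonoidAlgebra k G) ∣ symmSingle (j • g) := by
  induction j using Nat.twoStepInduction with
  | zero => rw [zero_nsmul, symmSingle_eq_zero_of_neg_eq neg_zero]; exact dvd_zero _
  | one => rw [one_nsmul]
  | more j ih _ =>
    rw [eq_sub_of_add_eq (symmSingle_mul_symmSingle_succ_nsmul (k := k) g j).symm]
    exact dvd_sub (dvd_mul_right _ _) ih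

end AddMonoidAlgebra

theorem Matrix.pow_mulVec_eq_smul {ι R : Type*} [Fintype ι] [DecidableEq ι] [CommSemiring R]
    {M : Matrix ι ι R} {v : ι → R} {s : R} (h : M *ᵥ v = s • v) (j : ℕ) :
    M ^ j *ᵥ v = s ^ j • v := by
  induction j with
  | zero => simp
  | succ j ih => rw [pow_succ', ← mulVec_mulVec, ih, mulVec_smul, h, smul_smul, pow_succ]

theorem pathGraph_adjMatrix_mulVec_eq_smul {R : Type*} [CommSemiring R] {n : ℕ} {s : R}
    {f : ℕ → R} (hf0 : f 0 = 0) (hfn : f (n + 1) = 0)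
    (hrec : ∀ j, s * f (j + 1) = f j + f (j + 2)) :
    (pathGraph n).adjMatrix R *ᵥ (fun x : Fin n => f (x + 1)) =
      s • fun x : Fin n => f (x + 1) := by
  ext x
  have hsplit : ∀ z : Fin n, (pathGraph n).adjMatrix R x z * f (z + 1) =
      (if (z : ℕ) + 1 = x then f (z + 1) else 0) +
        (if (z : ℕ) = x + 1 then f (z + 1) else 0) := by
    intro z
    rw [SimpleGraph.adjMatrix_apply]
    change (if (x : ℕ) + 1 = z ∨ (z : ℕ) + 1 = x then 1 else 0) * _ = _
    split_ifs <;> first | omega | simp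
  have hlower : (∑ i ∈ range n, if i + 1 = (x : ℕ) then f (i + 1) else 0) = f x := by
    have h := sum_range_succ' (fun i => if i = (x : ℕ) then f i else 0) n
    rw [sum_ite_eq', if_pos (by simp), hf0, ite_self, add_zero] at h
    exact h.symm
  have hupper : (∑ i ∈ range n, if i = (x : ℕ) + 1 then f (i + 1) else 0) = f (x + 2) := by
    rw [sum_ite_eq']
    split_ifs with h
    · rfl
    · rw [show (x : ℕ) + 2 = n + 1 by simp at h; omega, hfn]
  rw [mulVec, dotProduct, sum_congr rfl fun z _ => hsplit z, sum_add_distrib,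
    Fin.sum_univ_eq_sum_range (fun z => if z + 1 = x then f (z + 1) else 0),
    Fin.sum_univ_eq_sum_range (fun z => if z = x + 1 then f (z + 1) else 0), hlower, hupper,
    Pi.smul_apply, smul_eq_mul, hrec]

variable {k G : Type*} [CommRing k]

theorem pathGraph_adjMatrix_pow_mulVec_symmSingle_eq_zero [CharP k 2] [AddCommGroup G] {m : ℕ}
    {g : G} (hg : 2 ^ (m + 1) • g = 0) {j : ℕ} (hj : 2 ^ m ≤ j + 1) :
    (pathGraph (2 ^ m - 1)).adjMatrix (AddMonoidAlgebra k G) ^ j *ᵥ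
      (fun z : Fin (2 ^ m - 1) => symmSingle (((z : ℕ) + 1) • g)) = 0 := by
  have htop : (symmSingle (2 ^ m • g) : AddMonoidAlgebra k G) = 0 := by
    refine symmSingle_eq_zero_of_neg_eq (neg_eq_of_add_eq_zero_left ?_)
    rwa [← add_nsmul, ← two_mul, ← pow_succ']
  have hnil : (symmSingle g : AddMonoidAlgebra k G) ^ (j + 1) = 0 :=
    pow_eq_zero_of_le hj (by rw [symmSingle_pow_two_pow, htop])
  have heigen := pathGraph_adjMatrix_mulVec_eq_smul (n := 2 ^ m - 1) (s := symmSingle g)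
    (f := fun i => (symmSingle (i • g) : AddMonoidAlgebra k G))
    (by rw [zero_nsmul, symmSingle_eq_zero_of_neg_eq neg_zero])
    (by rw [Nat.sub_add_cancel Nat.one_le_two_pow, htop])
    (fun i => by
      rw [add_comm (symmSingle (i • g))]
      exact symmSingle_mul_symmSingle_succ_nsmul g i)
  funext x
  obtain ⟨u, hu⟩ := symmSingle_dvd_symmSingle_nsmul (k := k) g (x + 1)
  rw [Matrix.pow_mulVec_eq_smul heigen, Pi.smul_apply, smul_eq_mul, hu, ← mul_assoc, ← pow_succ,
    hnil, zero_mul, Pi.zero_apply]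

theorem coeff_adjMatrix_pow_mulVec_symmSingle {n N : ℕ} (hN : 2 * n < N)
    (H : SimpleGraph (Fin n)) [DecidableRel H.Adj] (j : ℕ) (x y : Fin n) :
    ((H.adjMatrix (AddMonoidAlgebra k (ZMod N)) ^ j *ᵥ
      fun z : Fin n => symmSingle (((z : ℕ) + 1) • 1)) x).coeff (((y : ℕ) + 1) • 1) =
      (#(H.finsetWalkLength j x y) : k) := by
  have hterm : ∀ z : Fin n,
      ((H.adjMatrix _ ^ j) x z * symmSingle (((z : ℕ) + 1) • (1 : ZMod N))).coeff
        (((y : ℕ) + 1) • 1) = if z = y then (#(H.finsetWalkLength j x z) : k) else 0 := by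
    intro z
    rw [SimpleGraph.adjMatrix_pow_apply_eq_card_walk, SimpleGraph.card_set_walk_length_eq,
      ← nsmul_eq_mul, coeff_smul_apply, nsmul_one, nsmul_one,
      coeff_symmSingle_natCast_natCast (by omega) (by omega) (by omega)]
    simp only [add_left_inj, Fin.val_inj, smul_ite, nsmul_eq_mul, mul_one, smul_zero]
  rw [mulVec, dotProduct, coeff_sum, Finsupp.finsetSum_apply, sum_congr rfl fun z _ => hterm z,
    sum_ite_eq', if_pos (mem_univ _)]

theorem even_card_walks_pathGraph_general (m : ℕ) (n : ℕ) (hn : n = 2 ^ m - 1)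
    (k : ℕ) (hk : n ≤ k) (x y : Fin n) :
    Even ((pathGraph n).finsetWalkLength k x y).card := by
  subst hn
  have hN : 2 * (2 ^ m - 1) < 2 ^ (m + 1) := by
    have := Nat.one_le_two_pow (n := m)
    rw [pow_succ']
    omega
  have hg : 2 ^ (m + 1) • (1 : ZMod (2 ^ (m + 1))) = 0 := by rw [nsmul_one, ZMod.natCast_self]
  have h := coeff_adjMatrix_pow_mulVec_symmSingle (k := ZMod 2) hN (pathGraph _) k x y
  rw [pathGraph_adjMatrix_pow_mulVec_symmSingle_eq_zero hg (by omega), Pi.zero_apply, coeff_zero,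
    Finsupp.coe_zero, Pi.zero_apply] at h
  exact ZMod.natCast_eq_zero_iff_even.mp h.symm

/-- For `n = 2^m - 1` and `k ≥ n`, the number of walks of length `k` between any two
vertices of the path graph `P_n` is even. -/
theorem even_card_walks_pathGraph (m : ℕ) (hm : 0 < m) (n : ℕ) (hn : n = 2 ^ m - 1)
    (k : ℕ) (hk : n ≤ k) (x y : Fin n) :
    Even ((pathGraph n).finsetWalkLength k x y).card :=
  even_card_walks_pathGraph_general m n hn k hk x y
end

section
/- Let m be a positive integer and n = 2^m - 1. The n × n matrix A over ℤ/2ℤ with a_{i,j} = 1 if |i - j| = 1 and 0 otherwise is nilpotent. -/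
open Matrix Finset

namespace PathNilAux

variable {N : ℕ} [NeZero N]

def shiftM (N : ℕ) [NeZero N] (k : ZMod N) : Matrix (ZMod N) (ZMod N) (ZMod 2) :=
  Matrix.of fun a b => if a = b + k then 1 else 0

theorem shiftM_mul_apply {α : Type} (k : ZMod N) (B : Matrix (ZMod N) α (ZMod 2))
    (a : ZMod N) (i : α) : (shiftM N k * B) a i = B (a - k) i := by
  rw [Matrix.mul_apply, Finset.sum_eq_single (a - k)]
  · rw [shiftM, Matrix.of_apply, if_pos (by ring), one_mul]
  · intro b _ hb
    rw [shiftM, Matrix.of_apply, if_neg, zero_mul]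
    intro h
    exact hb (by rw [h]; ring)
  · intro h; exact absurd (Finset.mem_univ _) h

theorem shiftM_mul (k l : ZMod N) : shiftM N k * shiftM N l = shiftM N (k + l) := by
  ext a c
  rw [shiftM_mul_apply]
  simp only [shiftM, Matrix.of_apply]
  exact if_congr ⟨fun h => by linear_combination h, fun h => by linear_combination h⟩ rfl rfl

theorem shiftM_pow (k : ZMod N) (t : ℕ) : shiftM N k ^ t = shiftM N ((t : ZMod N) * k) := by
  induction t with
  | zero =>
    ext a b
    simp [shiftM, Matrix.one_apply]
  | succ t ih =>
    rw [pow_succ, ih, shiftM_mul]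
    push_cast
    ring_nf

def G (N : ℕ) [NeZero N] (a x : ZMod N) : ZMod 2 :=
  (if a = x then 1 else 0) + (if a = -x then 1 else 0)

theorem G_eq_zero_of_self_neg {a x : ZMod N} (h : x = -x) : G N a x = 0 := by
  rw [G, ← h, CharTwo.add_self_eq_zero]

theorem G_shift (a x : ZMod N) :
    G N (a - 1) x + G N (a + 1) x = G N a (x + 1) + G N a (x - 1) := by
  simp only [G]
  have e1 : (if a - 1 = x then (1 : ZMod 2) else 0) = if a = x + 1 then 1 else 0 :=
    if_congr ⟨fun h => by linear_combination h, fun h => by linear_combination h⟩ rfl rfl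
  have e2 : (if a - 1 = -x then (1 : ZMod 2) else 0) = if -a = x - 1 then 1 else 0 :=
    if_congr ⟨fun h => by linear_combination -h, fun h => by linear_combination -h⟩ rfl rfl
  have e3 : (if a + 1 = x then (1 : ZMod 2) else 0) = if a = x - 1 then 1 else 0 :=
    if_congr ⟨fun h => by linear_combination h, fun h => by linear_combination h⟩ rfl rfl
  have e4 : (if a + 1 = -x then (1 : ZMod 2) else 0) = if -a = x + 1 then 1 else 0 :=
    if_congr ⟨fun h => by linear_combination -h, fun h => by linear_combination -h⟩ rfl rfl
  have e5 : (if a = -(x + 1) then (1 : ZMod 2) else 0) = if -a = x + 1 then 1 else 0 :=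
    if_congr ⟨fun h => by linear_combination -h, fun h => by linear_combination -h⟩ rfl rfl
  have e6 : (if a = -(x - 1) then (1 : ZMod 2) else 0) = if -a = x - 1 then 1 else 0 :=
    if_congr ⟨fun h => by linear_combination -h, fun h => by linear_combination -h⟩ rfl rfl
  rw [e1, e2, e3, e4, e5, e6]
  ring

def cv (n N : ℕ) [NeZero N] (i : Fin n) : ZMod N := (((i : ℕ) + 1 : ℕ) : ZMod N)

def Emb (n N : ℕ) [NeZero N] : Matrix (ZMod N) (Fin n) (ZMod 2) :=
  Matrix.of fun a i => G N a (cv n N i)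

variable {n : ℕ} (hNn : N = 2 * n + 2)

include hNn

theorem cv_val (i : Fin n) : (cv n N i).val = (i : ℕ) + 1 :=
  ZMod.val_cast_of_lt (by have := i.isLt; omega)

theorem cv_inj {i j : Fin n} (h : cv n N i = cv n N j) : i = j := by
  have h2 := congrArg ZMod.val h
  rw [cv_val hNn, cv_val hNn] at h2
  exact Fin.ext (by omega)

theorem cv_ne_neg (i j : Fin n) : cv n N i ≠ -cv n N j := by
  intro h
  have h2 : ((((i : ℕ) + 1) + ((j : ℕ) + 1) : ℕ) : ZMod N) = 0 := by
    push_cast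
    have : cv n N i + cv n N j = 0 := by rw [h]; ring
    simp only [cv] at this
    push_cast at this
    linear_combination this
  rw [ZMod.natCast_eq_zero_iff] at h2
  have h3 := Nat.le_of_dvd (by omega) h2
  have := i.isLt; have := j.isLt
  omega

theorem cancel {α : Type} [Fintype α] (X : Matrix (Fin n) α (ZMod 2))
    (h : Emb n N * X = 0) : X = 0 := by
  ext i j
  have h0 := congrFun (congrFun h (cv n N i)) j
  rw [Matrix.mul_apply] at h0
  rw [Finset.sum_eq_single i] at h0
  · rw [Matrix.zero_apply]
    rw [show Emb n N (cv n N i) i = 1 from ?_, one_mul] at h0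
    · exact h0
    · simp only [Emb, Matrix.of_apply, G]
      rw [if_neg (cv_ne_neg hNn i i)]
      simp
  · intro j' _ hj'
    rw [show Emb n N (cv n N i) j' = 0 from ?_, zero_mul]
    simp only [Emb, Matrix.of_apply, G]
    rw [if_neg (fun hh => hj' (cv_inj hNn hh).symm), if_neg (cv_ne_neg hNn i j'), add_zero]
  · intro hh; exact absurd (Finset.mem_univ _) hh

theorem intertwine (A : Matrix (Fin n) (Fin n) (ZMod 2))
    (hA : ∀ i j, A i j = if ((i : ℤ) - (j : ℤ)).natAbs = 1 then 1 else 0) :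
    (shiftM N 1 + shiftM N (-1)) * Emb n N = Emb n N * A := by
  ext a i
  rw [Matrix.add_mul, Matrix.add_apply, shiftM_mul_apply, shiftM_mul_apply, Matrix.mul_apply]
  simp only [Emb, Matrix.of_apply]
  rw [sub_neg_eq_add, G_shift]
  have hsum : ∀ j : Fin n, G N a (cv n N j) * A j i =
      (if (j : ℕ) = (i : ℕ) + 1 then G N a (cv n N j) else 0)
      + (if (i : ℕ) = (j : ℕ) + 1 then G N a (cv n N j) else 0) := by
    intro j
    rw [hA j i]
    by_cases h1 : (j : ℕ) = (i : ℕ) + 1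
    · rw [if_pos (by omega), if_pos h1, if_neg (by omega), mul_one, add_zero]
    · by_cases h2 : (i : ℕ) = (j : ℕ) + 1
      · rw [if_pos (by omega), if_neg h1, if_pos h2, mul_one, zero_add]
      · rw [if_neg (by omega), if_neg h1, if_neg h2, mul_zero, add_zero]
  rw [Finset.sum_congr rfl (fun j _ => hsum j), Finset.sum_add_distrib]
  have hS1 : (∑ j : Fin n, if (j : ℕ) = (i : ℕ) + 1 then G N a (cv n N j) else 0)
      = if (i : ℕ) + 1 < n then G N a (cv n N i + 1) else 0 := by
    by_cases h : (i : ℕ) + 1 < n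
    · rw [if_pos h, Finset.sum_eq_single (⟨(i : ℕ) + 1, h⟩ : Fin n)]
      · rw [if_pos rfl]
        congr 1
        simp only [cv]
        push_cast
        ring
      · intro b _ hb
        exact if_neg (fun hh => hb (Fin.ext hh))
      · intro hh; exact absurd (Finset.mem_univ _) hh
    · rw [if_neg h, Finset.sum_eq_zero]
      intro j _
      exact if_neg (by have := j.isLt; omega)
  have hS2 : (∑ j : Fin n, if (i : ℕ) = (j : ℕ) + 1 then G N a (cv n N j) else 0)
      = if 0 < (i : ℕ) then G N a (cv n N i - 1) else 0 := by
    by_cases h : 0 < (i : ℕ)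
    · rw [if_pos h, Finset.sum_eq_single (⟨(i : ℕ) - 1, by have := i.isLt; omega⟩ : Fin n)]
      · rw [if_pos (by simp; omega)]
        congr 1
        simp only [cv]
        rw [show ((i : ℕ) - 1 + 1) = (i : ℕ) from by omega]
        push_cast
        ring
      · intro b _ hb
        exact if_neg (fun hh => hb (Fin.ext (by simp; omega)))
      · intro hh; exact absurd (Finset.mem_univ _) hh
    · rw [if_neg h, Finset.sum_eq_zero]
      intro j _
      exact if_neg (by omega)
  rw [hS1, hS2]
  by_cases h1 : (i : ℕ) + 1 < n <;> by_cases h2 : 0 < (i : ℕ)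
  · rw [if_pos h1, if_pos h2]
  · -- i = 0 : low end term vanishes
    rw [if_pos h1, if_neg h2]
    have hc : cv n N i - 1 = 0 := by
      simp only [cv]
      rw [show (i : ℕ) = 0 from by omega]
      push_cast
      ring
    rw [hc, G_eq_zero_of_self_neg (x := (0 : ZMod N)) neg_zero.symm]
  · -- i = n - 1 : high end term vanishes
    rw [if_neg h1, if_pos h2]
    have hx : cv n N i + 1 + (cv n N i + 1) = 0 := by
      simp only [cv]
      rw [show (i : ℕ) + 1 = n from by have := i.isLt; omega]
      rw [show ((n : ℕ) : ZMod N) + 1 + (((n : ℕ) : ZMod N) + 1) = ((2 * n + 2 : ℕ) : ZMod N)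
        from by push_cast; ring, ← hNn, ZMod.natCast_self]
    rw [G_eq_zero_of_self_neg (eq_neg_of_add_eq_zero_left hx)]
  · -- n = 1 : both vanish
    rw [if_neg h1, if_neg h2]
    have hc : cv n N i - 1 = 0 := by
      simp only [cv]
      rw [show (i : ℕ) = 0 from by omega]
      push_cast
      ring
    have hx : cv n N i + 1 + (cv n N i + 1) = 0 := by
      simp only [cv]
      rw [show (i : ℕ) + 1 = n from by have := i.isLt; omega]
      rw [show ((n : ℕ) : ZMod N) + 1 + (((n : ℕ) : ZMod N) + 1) = ((2 * n + 2 : ℕ) : ZMod N)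
        from by push_cast; ring, ← hNn, ZMod.natCast_self]
    rw [hc, G_eq_zero_of_self_neg (eq_neg_of_add_eq_zero_left hx),
      G_eq_zero_of_self_neg (x := (0 : ZMod N)) neg_zero.symm]

omit hNn

theorem Mzero (m : ℕ) (hN : N = 2 ^ (m + 1)) :
    (shiftM N 1 + shiftM N (-1)) ^ 2 ^ m = 0 := by
  haveI : Fact (Nat.Prime 2) := ⟨Nat.prime_two⟩
  have hcomm : Commute (shiftM N 1) (shiftM N (-1)) := by
    show _ * _ = _ * _
    rw [shiftM_mul, shiftM_mul, add_comm]
  rw [add_pow_char_pow_of_commute 2 m hcomm, shiftM_pow, shiftM_pow, mul_one, mul_neg_one]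
  have h2 : (((2 ^ m : ℕ) : ZMod N)) = -(((2 ^ m : ℕ) : ZMod N)) := by
    apply eq_neg_of_add_eq_zero_left
    rw [← Nat.cast_add, show (2 ^ m + 2 ^ m : ℕ) = N from by rw [hN]; ring, ZMod.natCast_self]
  ext a b
  rw [Matrix.add_apply, ← h2, CharTwo.add_self_eq_zero, Matrix.zero_apply]

end PathNilAux

open PathNilAux in
/-- For `n = 2^m - 1`, the `n × n` matrix over `ℤ/2ℤ` with `a i j = 1` iff `|i - j| = 1`
is nilpotent. -/
theorem pathGraph_adjMatrix_isNilpotent (m : ℕ) (hm : 0 < m) (n : ℕ) (hn : n = 2 ^ m - 1)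
    (A : Matrix (Fin n) (Fin n) (ZMod 2))
    (hA : ∀ i j, A i j = if ((i : ℤ) - (j : ℤ)).natAbs = 1 then 1 else 0) :
    IsNilpotent A := by
  have h1 : (1 : ℕ) ≤ 2 ^ m := Nat.one_le_two_pow
  set N := 2 ^ (m + 1) with hNdef
  have hNn : N = 2 * n + 2 := by rw [hNdef, hn, pow_succ]; omega
  haveI : NeZero N := ⟨by omega⟩
  have hint := intertwine hNn A hA
  have hzero := Mzero (N := N) m hNdef
  have hall : ∀ k : ℕ, (shiftM N 1 + shiftM N (-1)) ^ k * Emb n N = Emb n N * A ^ k := by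
    intro k
    induction k with
    | zero => simp
    | succ k ih =>
      rw [pow_succ, pow_succ, Matrix.mul_assoc, hint, ← Matrix.mul_assoc, ih, Matrix.mul_assoc]
  exact ⟨2 ^ m, cancel hNn _ (by rw [← hall, hzero, Matrix.zero_mul])⟩
end

section
/- Let n = 2^{l+1} - 1 and let c be the middle vertex 2^l of the path graph P_n. If x and y are vertices of P_n, then the number of walks of length k from x to y that visit c at least twice is even. -/
/-!
Reflection of `P_n` about its middle vertex `c` is a graph automorphism that fixes `c` and no
neighbour of `c`. Reflecting the part of a walk between its first and second visits to `c`
therefore gives a length- and endpoint-preserving involution on the walks that visit `c` at least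
twice, and it has no fixed points: the vertex right after the first visit is moved.
-/

theorem Finset.even_card_of_involution {α : Type*} {s : Finset α} (g : α → α)
    (hg_mem : ∀ a ∈ s, g a ∈ s) (hg_invol : ∀ a ∈ s, g (g a) = a) (hg_ne : ∀ a ∈ s, g a ≠ a) :
    Even s.card := by
  have h : ∑ _ ∈ s, (1 : ZMod 2) = 0 :=
    Finset.sum_involution (fun a _ => g a) (fun _ _ => by decide) (fun a ha _ => hg_ne a ha)
      hg_mem hg_invol
  simpa [ZMod.natCast_eq_zero_iff_even] using h

namespace SimpleGraph.Walk

variable {V : Type*} {G : SimpleGraph V} {c x y : V}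

theorem append_right_injective (a : G.Walk x c) :
    Function.Injective (a.append : G.Walk c y → G.Walk x y) := by
  intro q r h
  apply ext_support
  have h := congrArg support h
  rw [support_append, support_append] at h
  rw [← cons_tail_support q, ← cons_tail_support r, List.append_cancel_left h]

variable [DecidableEq V]

theorem takeUntil_append_of_count_eq_one (a : G.Walk x c) (b : G.Walk c y)
    (ha : a.support.count c = 1) (h : c ∈ (a.append b).support) :
    (a.append b).takeUntil c h = a := by
  induction a with
  | nil => simp
  | @cons u v w hadj a ih =>
    have hu : u ≠ w := by
      rintro rfl
      simp only [support_cons, List.count_cons_self, add_eq_right, List.count_eq_zero] at ha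
      exact ha a.end_mem_support
    rw [support_cons, List.count_cons_of_ne hu] at ha
    simp only [cons_append]
    rw [takeUntil_cons (support_subset_support_append_left _ _ a.end_mem_support) hu, ih b ha]

theorem dropUntil_append_of_count_eq_one (a : G.Walk x c) (b : G.Walk c y)
    (ha : a.support.count c = 1) (h : c ∈ (a.append b).support) :
    (a.append b).dropUntil c h = b := by
  apply a.append_right_injective
  conv_rhs => rw [← (a.append b).take_spec h, takeUntil_append_of_count_eq_one a b ha]

variable {σ : G →g G} {hc : σ c = c}

variable (σ hc) in
/-- Applies `σ` to the part of a walk from `c` up to its first return to `c`. -/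
def reflectInitialLoop : ∀ {y : V}, G.Walk c y → G.Walk c y
  | _, nil => nil
  | _, cons h q =>
    if hq : c ∈ q.support then
      (((cons h (q.takeUntil c hq)).map σ).copy hc hc).append (q.dropUntil c hq)
    else cons h q

theorem reflectInitialLoop_of_count_le_one {q : G.Walk c y} (hq : q.support.count c ≤ 1) :
    q.reflectInitialLoop σ hc = q := by
  cases q with
  | nil => rfl
  | cons h q =>
    have hq' : c ∉ q.support := by
      rw [← List.count_eq_zero]
      simp only [support_cons, List.count_cons_self] at hq
      omega
    simp [reflectInitialLoop, hq']

theorem exists_eq_cons_append_of_two_le_count {q : G.Walk c y} (hq : 2 ≤ q.support.count c) :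
    ∃ (d : V) (h : G.Adj c d) (m : G.Walk d c) (r : G.Walk c y),
      m.support.count c = 1 ∧ q = (cons h m).append r := by
  cases q with
  | nil => simp at hq
  | cons h q =>
    have hmem : c ∈ q.support := by
      rw [← List.count_pos_iff]
      simp only [support_cons, List.count_cons_self] at hq
      omega
    exact ⟨_, h, q.takeUntil c hmem, q.dropUntil c hmem,
      q.count_support_takeUntil_eq_one hmem, by simp [cons_append]⟩

theorem reflectInitialLoop_cons_append {d : V} (h : G.Adj c d) (m : G.Walk d c)
    (hm : m.support.count c = 1) (r : G.Walk c y) :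
    ((cons h m).append r).reflectInitialLoop σ hc = (((cons h m).map σ).copy hc hc).append r := by
  have hmem : c ∈ (m.append r).support :=
    support_subset_support_append_left _ _ m.end_mem_support
  simp only [cons_append, reflectInitialLoop, dif_pos hmem,
    takeUntil_append_of_count_eq_one m r hm, dropUntil_append_of_count_eq_one m r hm]

theorem count_support_map_of_injective (hσ : Function.Injective σ) (hc : σ c = c) {u v : V}
    (p : G.Walk u v) : (p.map σ).support.count c = p.support.count c := by
  rw [support_map]
  conv_lhs => rw [← hc, List.count_map_of_injective _ _ hσ]

theorem length_reflectInitialLoop (q : G.Walk c y) :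
    (q.reflectInitialLoop σ hc).length = q.length := by
  rcases le_or_gt (q.support.count c) 1 with hq | hq
  · rw [reflectInitialLoop_of_count_le_one hq]
  · obtain ⟨d, h, m, r, hm, rfl⟩ := exists_eq_cons_append_of_two_le_count hq
    rw [reflectInitialLoop_cons_append h m hm]
    simp only [length_append, length_copy, length_map, length_cons]

theorem count_support_reflectInitialLoop (hσ : Function.Injective σ) (q : G.Walk c y) :
    (q.reflectInitialLoop σ hc).support.count c = q.support.count c := by
  rcases le_or_gt (q.support.count c) 1 with hq | hq
  · rw [reflectInitialLoop_of_count_le_one hq]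
  · obtain ⟨d, h, m, r, hm, rfl⟩ := exists_eq_cons_append_of_two_le_count hq
    rw [reflectInitialLoop_cons_append h m hm, support_append, support_append, List.count_append,
      List.count_append, support_copy, count_support_map_of_injective hσ hc]

theorem reflectInitialLoop_involutive (hσ : Function.Involutive σ) :
    Function.Involutive (reflectInitialLoop σ hc : G.Walk c y → G.Walk c y) := by
  intro q
  rcases le_or_gt (q.support.count c) 1 with hq | hq
  · rw [reflectInitialLoop_of_count_le_one hq, reflectInitialLoop_of_count_le_one hq]
  · obtain ⟨d, h, m, r, hm, rfl⟩ := exists_eq_cons_append_of_two_le_count hq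
    have hσm : ((m.map σ).copy rfl hc).support.count c = 1 := by
      rw [support_copy, count_support_map_of_injective hσ.injective hc, hm]
    rw [reflectInitialLoop_cons_append h m hm, map_cons, copy_cons,
      reflectInitialLoop_cons_append _ _ hσm]
    congr 1
    apply ext_support
    simp only [support_copy, support_map, support_cons, List.map_cons, List.map_map, hc,
      hσ.comp_self, List.map_id]

theorem reflectInitialLoop_ne (hσ : ∀ d, G.Adj c d → σ d ≠ d) {q : G.Walk c y}
    (hq : 2 ≤ q.support.count c) : q.reflectInitialLoop σ hc ≠ q := by
  obtain ⟨d, h, m, r, hm, rfl⟩ := exists_eq_cons_append_of_two_le_count hq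
  rw [reflectInitialLoop_cons_append h m hm, map_cons, copy_cons, cons_append, cons_append]
  intro heq
  have := congrArg (fun w => w.getVert 1) heq
  simp only [getVert_cons_succ, getVert_zero] at this
  exact hσ d h this

theorem count_support_append_add_one (a : G.Walk x c) (q : G.Walk c y) :
    (a.append q).support.count c + 1 = a.support.count c + q.support.count c := by
  rw [support_append, List.count_append, ← cons_tail_support q, List.count_cons_self,
    List.tail_cons, add_assoc]

theorem exists_eq_append_of_mem_support {p : G.Walk x y} (hp : c ∈ p.support) :
    ∃ (a : G.Walk x c) (q : G.Walk c y), a.support.count c = 1 ∧ p = a.append q :=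
  ⟨_, _, p.count_support_takeUntil_eq_one hp, (p.take_spec hp).symm⟩

variable (σ hc) in
def reflectFirstLoop (p : G.Walk x y) : G.Walk x y :=
  if hp : c ∈ p.support then
    (p.takeUntil c hp).append ((p.dropUntil c hp).reflectInitialLoop σ hc)
  else p

theorem reflectFirstLoop_of_notMem {p : G.Walk x y} (hp : c ∉ p.support) :
    p.reflectFirstLoop σ hc = p :=
  dif_neg hp

theorem reflectFirstLoop_append (a : G.Walk x c) (q : G.Walk c y) (ha : a.support.count c = 1) :
    (a.append q).reflectFirstLoop σ hc = a.append (q.reflectInitialLoop σ hc) := by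
  have hmem : c ∈ (a.append q).support :=
    support_subset_support_append_left _ _ a.end_mem_support
  rw [reflectFirstLoop, dif_pos hmem, takeUntil_append_of_count_eq_one a q ha,
    dropUntil_append_of_count_eq_one a q ha]

theorem length_reflectFirstLoop (p : G.Walk x y) :
    (p.reflectFirstLoop σ hc).length = p.length := by
  by_cases hp : c ∈ p.support
  · obtain ⟨a, q, ha, rfl⟩ := exists_eq_append_of_mem_support hp
    rw [reflectFirstLoop_append a q ha, length_append, length_append, length_reflectInitialLoop]
  · rw [reflectFirstLoop_of_notMem hp]

theorem count_support_reflectFirstLoop (hσ : Function.Injective σ) (p : G.Walk x y) :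
    (p.reflectFirstLoop σ hc).support.count c = p.support.count c := by
  by_cases hp : c ∈ p.support
  · obtain ⟨a, q, ha, rfl⟩ := exists_eq_append_of_mem_support hp
    rw [reflectFirstLoop_append a q ha]
    have := count_support_append_add_one a q
    have := count_support_append_add_one a (q.reflectInitialLoop σ hc)
    have := count_support_reflectInitialLoop (hc := hc) hσ q
    omega
  · rw [reflectFirstLoop_of_notMem hp]

theorem reflectFirstLoop_involutive (hσ : Function.Involutive σ) :
    Function.Involutive (reflectFirstLoop σ hc : G.Walk x y → G.Walk x y) := by
  intro p
  by_cases hp : c ∈ p.support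
  · obtain ⟨a, q, ha, rfl⟩ := exists_eq_append_of_mem_support hp
    rw [reflectFirstLoop_append a q ha, reflectFirstLoop_append a _ ha,
      reflectInitialLoop_involutive hσ]
  · rw [reflectFirstLoop_of_notMem hp, reflectFirstLoop_of_notMem hp]

theorem reflectFirstLoop_ne (hσ : ∀ d, G.Adj c d → σ d ≠ d) {p : G.Walk x y}
    (hp : 2 ≤ p.support.count c) : p.reflectFirstLoop σ hc ≠ p := by
  obtain ⟨a, q, ha, rfl⟩ :=
    exists_eq_append_of_mem_support (List.count_pos_iff.mp (by omega : 0 < p.support.count c))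
  have hq : 2 ≤ q.support.count c := by
    have := count_support_append_add_one a q
    omega
  rw [reflectFirstLoop_append a q ha]
  exact fun heq => reflectInitialLoop_ne hσ hq (append_right_injective a heq)

end SimpleGraph.Walk

theorem SimpleGraph.even_card_filter_two_le_count_support {V : Type*} [DecidableEq V]
    {G : SimpleGraph V} [G.LocallyFinite] {c : V} (σ : G →g G) (hσ : Function.Involutive σ)
    (hc : σ c = c) (hσ_adj : ∀ d, G.Adj c d → σ d ≠ d) (k : ℕ) (x y : V) :
    Even ((G.finsetWalkLength k x y).filter (fun p => 2 ≤ p.support.count c)).card := by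
  refine Finset.even_card_of_involution (Walk.reflectFirstLoop σ hc) ?_
    (fun p _ => Walk.reflectFirstLoop_involutive hσ p)
    (fun p hp => Walk.reflectFirstLoop_ne hσ_adj (Finset.mem_filter.mp hp).2)
  intro p hp
  simp only [Finset.mem_filter, SimpleGraph.mem_finsetWalkLength_iff] at hp ⊢
  rwa [Walk.length_reflectFirstLoop, Walk.count_support_reflectFirstLoop hσ.injective]

def pathGraph.reverse (n : ℕ) : pathGraph n →g pathGraph n where
  toFun := Fin.rev
  map_rel' {i j} h := by
    simp only [pathGraph, Fin.val_rev] at h ⊢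
    omega

theorem pathGraph.reverse_apply {n : ℕ} (i : Fin n) : pathGraph.reverse n i = i.rev := rfl

/-- Let `n = 2^(l+1) - 1` and let `c` be the middle vertex `2^l` (the vertex of index
`2^l - 1` in `Fin n`). The number of walks of length `k` between any two vertices of `P_n`
that visit `c` at least twice is even. -/
theorem even_card_walks_visiting_middle_twice (l : ℕ) (n : ℕ) (hn : n = 2 ^ (l + 1) - 1)
    (c : Fin n) (hc : (c : ℕ) + 1 = 2 ^ l) (k : ℕ) (x y : Fin n) :
    Even (((pathGraph n).finsetWalkLength k x y).filter
      (fun p => 2 ≤ p.support.count c)).card := by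
  have hnc : n = 2 * c + 1 := by rw [pow_succ] at hn; omega
  refine SimpleGraph.even_card_filter_two_le_count_support (pathGraph.reverse n) Fin.rev_rev
    (Fin.ext (by rw [pathGraph.reverse_apply, Fin.val_rev]; omega)) ?_ k x y
  intro d hd hfix
  have := congrArg Fin.val hfix
  rw [pathGraph.reverse_apply, Fin.val_rev] at this
  simp only [pathGraph] at hd
  omega
end

section
/- Let n = 2^{l+1} - 1 with l ≥ 1, let c = 2^l, and let k ≥ n. For any vertices x, y of P_n, the number of walks of length k from x to y in P_n that never visit the vertex c is even. -/
open Finset AddMonoidAlgebra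

theorem Module.End.pow_apply_eq_sum_matrix_pow_smul {R M V : Type*} [Semiring R]
    [AddCommMonoid M] [Module R M] [Fintype V] [DecidableEq V] (f : Module.End R M)
    (A : Matrix V V R) (e : V → M) (hf : ∀ i, f (e i) = ∑ j, A i j • e j) (k : ℕ) (i : V) :
    (f ^ k) (e i) = ∑ j, (A ^ k) i j • e j := by
  induction k generalizing i with
  | zero => simp [Matrix.one_apply]
  | succ k ih =>
    rw [pow_succ, Module.End.mul_apply, hf, map_sum]
    simp_rw [map_smul, ih, Finset.smul_sum, smul_smul]
    rw [Finset.sum_comm]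
    simp_rw [← Finset.sum_smul, pow_succ', Matrix.mul_apply]

instance AddMonoidAlgebra.charP {R G : Type*} [CommRing R] [AddMonoid G] (p : ℕ) [CharP R p] :
    CharP (AddMonoidAlgebra R G) p :=
  charP_of_injective_algebraMap' R p

@[simp]
theorem pathGraph_adj {n : ℕ} {i j : Fin n} :
    (pathGraph n).Adj i j ↔ (i : ℕ) + 1 = j ∨ (j : ℕ) + 1 = i :=
  Iff.rfl

theorem sum_pathGraph_adjMatrix_smul {R M : Type*} [Semiring R] [AddCommMonoid M] [Module R M]
    {n : ℕ} (u : ℕ → M) (h0 : u 0 = 0) (hn : u (n + 1) = 0) (i : Fin n) :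
    ∑ j, (pathGraph n).adjMatrix R i j • u (j + 1) = u i + u (i + 2) := by
  have hsplit (j : Fin n) : (pathGraph n).adjMatrix R i j • u (j + 1) =
      (if (i : ℕ) + 1 = j then u (j + 1) else 0) + (if (j : ℕ) + 1 = i then u (j + 1) else 0) := by
    rw [SimpleGraph.adjMatrix_apply, ite_smul, one_smul, zero_smul]
    have : ¬((i : ℕ) + 1 = j ∧ (j : ℕ) + 1 = i) := by omega
    by_cases h : (i : ℕ) + 1 = j <;> by_cases h' : (j : ℕ) + 1 = i <;> simp_all
  simp_rw [hsplit, sum_add_distrib, Fin.sum_univ_eq_sum_range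
    (fun j => if (i : ℕ) + 1 = j then u (j + 1) else 0),
    Fin.sum_univ_eq_sum_range (fun j => if j + 1 = (i : ℕ) then u (j + 1) else 0), sum_ite_eq]
  have hup : (if (i : ℕ) + 1 ∈ range n then u (i + 1 + 1) else 0) = u (i + 2) := by
    split_ifs with h
    · rfl
    · rw [show (i : ℕ) + 2 = n + 1 by simp at h; omega, hn]
  have hdown : ∑ j ∈ range n, (if j + 1 = (i : ℕ) then u (j + 1) else 0) = u i := by
    rw [sum_eq_single_of_mem ((i : ℕ) - 1) (by simp; omega) (fun j _ hj => if_neg (by omega))]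
    split_ifs with h
    · rw [h]
    · rw [show (i : ℕ) = 0 by omega, h0]
  rw [hup, hdown, add_comm]

noncomputable def symmMonomial (M : ℕ) (t : ZMod M) : AddMonoidAlgebra (ZMod 2) (ZMod M) :=
  single t 1 + single (-t) 1

section symmMonomial

variable {M : ℕ}

theorem symmMonomial_one_mul (t : ZMod M) :
    symmMonomial M 1 * symmMonomial M t = symmMonomial M (t + 1) + symmMonomial M (t - 1) := by
  simp only [symmMonomial, add_mul, mul_add, single_mul_single, one_mul]
  rw [show 1 + -t = -(t - 1) by ring, show -1 + -t = -(t + 1) by ring, add_comm 1 t,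
    neg_add_eq_sub]
  abel

theorem symmMonomial_eq_zero_of_neg_eq {t : ZMod M} (h : -t = t) : symmMonomial M t = 0 := by
  rw [symmMonomial, h, CharTwo.add_self_eq_zero]

theorem symmMonomial_pow_two_pow (t : ZMod M) (m : ℕ) :
    symmMonomial M t ^ 2 ^ m = symmMonomial M (2 ^ m • t) := by
  rw [symmMonomial, add_pow_char_pow, single_pow, single_pow, one_pow, symmMonomial, smul_neg]

theorem coeff_symmMonomial_natCast {a b : ℕ} (ha : 0 < a) (hab : a + b < M) :
    (symmMonomial M b).coeff a = if b = a then 1 else 0 := by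
  have hneg : -(b : ZMod M) ≠ a := by
    rw [ne_eq, neg_eq_iff_add_eq_zero, ← Nat.cast_add, ZMod.natCast_eq_zero_iff]
    exact fun h => by have := Nat.le_of_dvd (by omega) h; omega
  have hpos : (b : ZMod M) = a ↔ b = a := by
    rw [ZMod.natCast_eq_natCast_iff', Nat.mod_eq_of_lt (by omega), Nat.mod_eq_of_lt (by omega)]
  simp only [symmMonomial, coeff_add, coeff_single, Finsupp.add_apply, Finsupp.single_apply,
    if_neg hneg, add_zero, hpos]

end symmMonomial

theorem pathGraph_adjMatrix_pow_two_pow_eq_zero (m : ℕ) :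
    (pathGraph (2 ^ m - 1)).adjMatrix (ZMod 2) ^ 2 ^ m = 0 := by
  set N := 2 ^ m
  have hN0 : 0 < N := by positivity
  let e : Fin (N - 1) → AddMonoidAlgebra (ZMod 2) (ZMod (2 * N)) :=
    fun j => symmMonomial _ ((j : ℕ) + 1 : ℕ)
  have hmid : symmMonomial (2 * N) N = 0 := by
    apply symmMonomial_eq_zero_of_neg_eq
    rw [neg_eq_iff_add_eq_zero, ← Nat.cast_add, ← two_mul, ZMod.natCast_self]
  have hstep (i : Fin (N - 1)) : LinearMap.mulLeft (ZMod 2) (symmMonomial _ 1) (e i) =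
      ∑ j, (pathGraph (N - 1)).adjMatrix (ZMod 2) i j • e j := by
    rw [sum_pathGraph_adjMatrix_smul (fun a => symmMonomial (2 * N) a) ?_ ?_,
      LinearMap.mulLeft_apply, symmMonomial_one_mul]
    · rw [add_comm]
      congr 2 <;> push_cast <;> ring
    · exact symmMonomial_eq_zero_of_neg_eq (by simp)
    · rwa [Nat.sub_add_cancel hN0]
  have hkill (i : Fin (N - 1)) :
      ∑ j, ((pathGraph (N - 1)).adjMatrix (ZMod 2) ^ N) i j • e j = 0 := by
    rw [← Module.End.pow_apply_eq_sum_matrix_pow_smul _ _ e hstep, LinearMap.pow_mulLeft,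
      LinearMap.mulLeft_apply, symmMonomial_pow_two_pow, nsmul_eq_mul, mul_one, hmid, zero_mul]
  ext i j
  have hcoeff (x : Fin (N - 1)) :
      (e x).coeff ((j : ℕ) + 1 : ℕ) = if x = j then 1 else 0 := by
    rw [coeff_symmMonomial_natCast (by omega) (by omega)]
    simp [Fin.ext_iff]
  simpa only [coeff_sum, Finsupp.finsetSum_apply, coeff_smul_apply, hcoeff, smul_eq_mul, mul_ite,
    mul_one, mul_zero, sum_ite_eq', mem_univ, if_true, coeff_zero, Finsupp.coe_zero,
    Pi.zero_apply, Matrix.zero_apply] using congrArg (fun x => x.coeff ((j : ℕ) + 1 : ℕ)) (hkill i)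

theorem even_card_finsetWalkLength_pathGraph {m k : ℕ} (hk : 2 ^ m ≤ k)
    (x y : Fin (2 ^ m - 1)) : Even #((pathGraph (2 ^ m - 1)).finsetWalkLength k x y) := by
  rw [← ZMod.natCast_eq_zero_iff_even, ← SimpleGraph.card_set_walk_length_eq,
    ← SimpleGraph.adjMatrix_pow_apply_eq_card_walk, ← Nat.sub_add_cancel hk, pow_add,
    pathGraph_adjMatrix_pow_two_pow_eq_zero, mul_zero, Matrix.zero_apply]

theorem SimpleGraph.Walk.mem_of_mem_support_of_closed {V : Type*} {G : SimpleGraph V}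
    {s : Set V} {c : V} (hs : ∀ a b, G.Adj a b → a ∈ s → b ≠ c → b ∈ s) {u v : V}
    (p : G.Walk u v) (hu : u ∈ s) (hc : c ∉ p.support) : ∀ w ∈ p.support, w ∈ s := by
  induction p with
  | nil => simpa using hu
  | cons hadj q ih =>
    rw [Walk.support_cons, List.mem_cons, not_or] at hc
    have hq : ∀ w ∈ q.support, w ∈ s :=
      ih (hs _ _ hadj hu fun h => hc.2 (h ▸ q.start_mem_support)) hc.2
    simpa [hu] using hq

theorem SimpleGraph.Embedding.card_filter_finsetWalkLength_support_subset_range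
    {V W : Type*} [DecidableEq V] [DecidableEq W] {G : SimpleGraph V} {H : SimpleGraph W}
    [G.LocallyFinite] [H.LocallyFinite] (f : G ↪g H) [DecidablePred (· ∈ Set.range f)] (k : ℕ)
    (u v : V) :
    #{p ∈ H.finsetWalkLength k (f u) (f v) | ∀ w ∈ p.support, w ∈ Set.range f} =
      #(G.finsetWalkLength k u v) := by
  have hcomp : ⇑f.toHom ∘ ⇑f.isoInduceRange.symm.toHom = Subtype.val :=
    funext fun w => congrArg Subtype.val (f.isoInduceRange.apply_symm_apply w)
  have hsymm (x : V) : f.isoInduceRange.symm ⟨f x, x, rfl⟩ = x :=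
    f.isoInduceRange.symm_apply_apply x
  rw [← card_map ⟨Walk.map f.toHom, Walk.map_injective_of_injective f.injective u v⟩]
  congr 1
  ext p
  simp only [mem_filter, mem_map, mem_finsetWalkLength_iff, Function.Embedding.coeFn_mk]
  constructor
  · rintro ⟨hlen, hp⟩
    have hlift : (((p.induce _ hp).map f.isoInduceRange.symm.toHom).map f.toHom).support =
        p.support := by
      rw [Walk.support_map, Walk.support_map, List.map_map, hcomp, Walk.support_induce,
        List.attachWith_map_subtype_val]
    refine ⟨((p.induce _ hp).map f.isoInduceRange.symm.toHom).copy (hsymm u) (hsymm v), ?_, ?_⟩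
    · have := congrArg List.length hlift
      simp only [Walk.length_support, Walk.length_map] at this
      rw [Walk.length_copy, Walk.length_map, ← hlen]
      omega
    · apply Walk.ext_support
      rw [Walk.support_map, Walk.support_copy, ← Walk.support_map, hlift]
  · rintro ⟨q, hlen, rfl⟩
    simp [hlen]

def pathGraphShiftEmbedding {m n : ℕ} (a : ℕ) (h : a + m ≤ n) : pathGraph m ↪g pathGraph n where
  toFun i := ⟨a + i, by omega⟩
  inj' i j hij := by simpa [Fin.ext_iff] using hij
  map_rel_iff' {i j} := by
    change (a + i + 1 = a + j ∨ a + j + 1 = a + i) ↔ ((i : ℕ) + 1 = j ∨ (j : ℕ) + 1 = i)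
    omega

@[simp]
theorem val_pathGraphShiftEmbedding_apply {m n a : ℕ} (h : a + m ≤ n) (i : Fin m) :
    (pathGraphShiftEmbedding a h i : ℕ) = a + i :=
  rfl

theorem mem_range_pathGraphShiftEmbedding {m n a : ℕ} (h : a + m ≤ n) (w : Fin n) :
    w ∈ Set.range (pathGraphShiftEmbedding a h) ↔ a ≤ w ∧ (w : ℕ) < a + m := by
  constructor
  · rintro ⟨i, rfl⟩
    simp
  · intro hw
    exact ⟨⟨w - a, by omega⟩, Fin.ext (by simp; omega)⟩

theorem even_card_walks_avoiding_of_embedding {W : Type*} [DecidableEq W] {G : SimpleGraph W}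
    [G.LocallyFinite] {m k : ℕ} (hk : 2 ^ m ≤ k) (f : pathGraph (2 ^ m - 1) ↪g G) {c : W}
    (hc : c ∉ Set.range f) (hf : ∀ a b, G.Adj a b → a ∈ Set.range f → b ≠ c → b ∈ Set.range f)
    (x : Fin (2 ^ m - 1)) (v : W) [DecidablePred fun p : G.Walk (f x) v => c ∉ p.support] :
    Even #{p ∈ G.finsetWalkLength k (f x) v | c ∉ p.support} := by
  classical
  have hstay (p : G.Walk (f x) v) (hp : c ∉ p.support) : ∀ w ∈ p.support, w ∈ Set.range f :=
    p.mem_of_mem_support_of_closed hf ⟨x, rfl⟩ hp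
  by_cases hv : v ∈ Set.range f
  · obtain ⟨y, rfl⟩ := hv
    rw [filter_congr (q := fun p => ∀ w ∈ p.support, w ∈ Set.range f)
      fun p _ => ⟨hstay p, fun h hcp => hc (h c hcp)⟩,
      f.card_filter_finsetWalkLength_support_subset_range]
    exact even_card_finsetWalkLength_pathGraph hk x y
  · rw [filter_false_of_mem fun p _ hp => hv (hstay p hp v p.end_mem_support), card_empty]
    exact Even.zero

theorem even_card_walks_avoiding_middle_general (l : ℕ) (n : ℕ)
    (hn : n = 2 ^ (l + 1) - 1) (c : Fin n) (hc : (c : ℕ) + 1 = 2 ^ l)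
    (k : ℕ) (hk : n ≤ k) (x y : Fin n) :
    Even (((pathGraph n).finsetWalkLength k x y).filter
      (fun p => c ∉ p.support)).card := by
  have hn' : n + 1 = 2 ^ l + 2 ^ l := by rw [pow_succ] at hn; omega
  have hk' : 2 ^ l ≤ k := by omega
  have hlow : 0 + (2 ^ l - 1) ≤ n := by omega
  have hhigh : 2 ^ l + (2 ^ l - 1) ≤ n := by omega
  have hside {a : ℕ} (h : a + (2 ^ l - 1) ≤ n) (ha : a = 0 ∨ a = 2 ^ l)
      (hx : a ≤ x ∧ (x : ℕ) < a + (2 ^ l - 1)) :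
      Even (((pathGraph n).finsetWalkLength k x y).filter (fun p => c ∉ p.support)).card := by
    obtain ⟨x, rfl⟩ := (mem_range_pathGraphShiftEmbedding h x).2 hx
    refine even_card_walks_avoiding_of_embedding hk' _ ?_ ?_ x y
    · rw [mem_range_pathGraphShiftEmbedding]
      omega
    · intro u w huw hu hw
      rw [mem_range_pathGraphShiftEmbedding] at hu ⊢
      rw [ne_eq, Fin.ext_iff] at hw
      rw [pathGraph_adj] at huw
      omega
  rcases lt_trichotomy x c with hx | rfl | hx
  · exact hside hlow (.inl rfl) (by omega)
  · rw [filter_false_of_mem fun p _ hp => hp p.start_mem_support, card_empty]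
    exact Even.zero
  · exact hside hhigh (.inr rfl) (by omega)

/-- Let `n = 2^(l+1) - 1` with `l ≥ 1`, let `c` be the middle vertex `2^l` (of index
`2^l - 1` in `Fin n`), and let `k ≥ n`. The number of walks of length `k` between any two
vertices of `P_n` that never visit `c` is even. -/
theorem even_card_walks_avoiding_middle (l : ℕ) (hl : 1 ≤ l) (n : ℕ)
    (hn : n = 2 ^ (l + 1) - 1) (c : Fin n) (hc : (c : ℕ) + 1 = 2 ^ l)
    (k : ℕ) (hk : n ≤ k) (x y : Fin n) :
    Even (((pathGraph n).finsetWalkLength k x y).filter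
      (fun p => c ∉ p.support)).card :=
  even_card_walks_avoiding_middle_general l n hn c hc k hk x y
end
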